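/- Fix a positive integer m and an integer k ≥ 0. Under the Beta-Binomial model-size prior with Beta(1, mp) hyperprior, i.e. P_p(k) = C(p,k) B(1+k, mp+p-k)/B(1, mp), the ratio P_p(k+1)/P_p(k) converges to 1/(m+1) as p → ∞. -/

import Mathlib

open Filter

/-- The Beta function B(a,b) = Γ(a)Γ(b)/Γ(a+b). -/
noncomputable def betaFn (a b : ℝ) : ℝ := Real.Gamma a * Real.Gamma b / Real.Gamma (a + b)

/-!
Since `Γ(s + 1) = s Γ(s)` and `C(p, k+1) (k+1) = C(p, k) (p - k)`, consecutive Beta-Binomial prior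
weights have the rational ratio `(p - k)(a + k) / ((k + 1)(b + p - k - 1))`. For `a = 1`, `b = m p`
this is `(p - k) / ((m + 1) p - (k + 1))`, which tends to `1 / (m + 1)`.
-/

open Topology

theorem betaFn_pos {a b : ℝ} (ha : 0 < a) (hb : 0 < b) : 0 < betaFn a b := by
  unfold betaFn
  have := Real.Gamma_pos_of_pos ha
  have := Real.Gamma_pos_of_pos hb
  have := Real.Gamma_pos_of_pos (add_pos ha hb)
  positivity

theorem betaFn_add_one_sub_one_mul {a b : ℝ} (ha : a ≠ 0) (hb : b ≠ 1) :
    betaFn (a + 1) (b - 1) * (b - 1) = a * betaFn a b := by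
  have hΓb : Real.Gamma b = (b - 1) * Real.Gamma (b - 1) := by
    simpa using Real.Gamma_add_one (sub_ne_zero.mpr hb)
  simp only [betaFn, Real.Gamma_add_one ha, hΓb, show a + 1 + (b - 1) = a + b by ring]
  ring

theorem Nat.cast_choose_succ_mul {R : Type*} [Ring R] (p k : ℕ) :
    (p.choose (k + 1) : R) * (k + 1) = p.choose k * ((p : R) - k) := by
  rcases le_or_gt k p with hkp | hpk
  · rw [← Nat.cast_sub hkp]
    exact_mod_cast congrArg (Nat.cast : ℕ → R) (Nat.choose_succ_right_eq p k)
  · simp [Nat.choose_eq_zero_of_lt hpk, Nat.choose_eq_zero_of_lt (Nat.lt_succ_of_lt hpk)]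

noncomputable def betaBinomialPrior (a b : ℝ) (p k : ℕ) : ℝ :=
  p.choose k * betaFn (a + k) (b + p - k) / betaFn a b

section
variable {a b : ℝ} {p k : ℕ}

theorem betaBinomialPrior_succ_mul (ha : a + k ≠ 0) (hb : b + p - k ≠ 1) :
    betaBinomialPrior a b p (k + 1) * ((k + 1) * (b + p - k - 1)) =
      betaBinomialPrior a b p k * ((p - k) * (a + k)) := by
  have hβ := betaFn_add_one_sub_one_mul ha hb
  have hC := Nat.cast_choose_succ_mul (R := ℝ) p k
  simp only [betaBinomialPrior, Nat.cast_succ, ← add_assoc, sub_add_eq_sub_sub]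
  calc _ = (p.choose (k + 1) * (k + 1) : ℝ) *
          (betaFn (a + k + 1) (b + p - k - 1) * (b + p - k - 1)) / betaFn a b := by ring
    _ = _ := by rw [hC, hβ]; ring

theorem betaBinomialPrior_pos (ha : 0 < a) (hb : 0 < b) (hk : k ≤ p) :
    0 < betaBinomialPrior a b p k := by
  have hpk : (k : ℝ) ≤ p := by exact_mod_cast hk
  have := betaFn_pos (a := a + k) (b := b + p - k) (by positivity) (by linarith)
  have := betaFn_pos ha hb
  have : (0 : ℝ) < p.choose k := by exact_mod_cast Nat.choose_pos hk
  unfold betaBinomialPrior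
  positivity

theorem betaBinomialPrior_succ_div (ha : 0 < a) (hb : 0 < b) (hk : k < p) :
    betaBinomialPrior a b p (k + 1) / betaBinomialPrior a b p k =
      (p - k) * (a + k) / ((k + 1) * (b + p - k - 1)) := by
  have hpk : (k : ℝ) + 1 ≤ p := by exact_mod_cast hk
  have hden : 0 < ((k : ℝ) + 1) * (b + p - k - 1) := by nlinarith
  rw [div_eq_div_iff (betaBinomialPrior_pos ha hb hk.le).ne' hden.ne',
    betaBinomialPrior_succ_mul (by positivity) (by linarith)]
  ring

end

theorem tendsto_natCast_sub_div_mul_sub (c d : ℝ) {r : ℝ} (hr : r ≠ 0) :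
    Tendsto (fun n : ℕ => ((n : ℝ) - c) / (r * n - d)) atTop (𝓝 (1 / r)) := by
  have hc := tendsto_const_div_atTop_nhds_zero_nat c
  have hd := tendsto_const_div_atTop_nhds_zero_nat d
  have hlim : Tendsto (fun n : ℕ => (1 - c / n) / (r - d / n)) atTop (𝓝 ((1 - 0) / (r - 0))) :=
    (tendsto_const_nhds.sub hc).div (tendsto_const_nhds.sub hd) (by simpa using hr)
  rw [sub_zero, sub_zero] at hlim
  refine hlim.congr' ?_
  filter_upwards [eventually_ne_atTop 0] with n hn
  have : (n : ℝ) ≠ 0 := by exact_mod_cast hn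
  rw [← mul_div_mul_right _ _ this]
  field_simp

/-- Under a Beta(1, mp) hyperprior, the model-size ratio tends to 1/(m+1). -/
theorem stmt7 (m : ℕ) (hm : 1 ≤ m) (k : ℕ) :
    Tendsto (fun p : ℕ =>
        ((p.choose (k + 1) : ℝ) *
            betaFn (1 + ((k : ℝ) + 1)) ((m : ℝ) * p + (p : ℝ) - ((k : ℝ) + 1)) /
            betaFn 1 ((m : ℝ) * p)) /
        ((p.choose k : ℝ) * betaFn (1 + (k : ℝ)) ((m : ℝ) * p + (p : ℝ) - (k : ℝ)) /
            betaFn 1 ((m : ℝ) * p)))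
      atTop (nhds (1 / ((m : ℝ) + 1))) := by
  have hm_pos : (0 : ℝ) < m := by exact_mod_cast hm
  suffices Tendsto (fun p : ℕ => betaBinomialPrior 1 (m * p) p (k + 1) /
      betaBinomialPrior 1 (m * p) p k) atTop (𝓝 (1 / ((m : ℝ) + 1))) by
    simpa only [betaBinomialPrior, Nat.cast_succ] using this
  refine (tendsto_natCast_sub_div_mul_sub k (k + 1) (by positivity)).congr' ?_
  filter_upwards [eventually_gt_atTop k] with p hk
  have hp : (0 : ℝ) < p := by exact_mod_cast (Nat.zero_le k).trans_lt hk
  rw [betaBinomialPrior_succ_div one_pos (by positivity) hk]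
  field_simp
  ring
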